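/- arXiv:2505.12868 — 2 statements merged into one kernel-verified Lean document; each statement's English description precedes it below -/
import Mathlib

section
/- Let ε and (δᵉ)_{e∈ℰ} be random vectors on a common probability space with values in ℝⁿ, where ℰ is a finite index set containing a distinguished element 0 with δ⁰ = 0 almost surely. Assume ε has zero mean and finite second moments, each δᵉ has finite second moments and is independent of ε, and let ωᵉ > 0 with Σ_{e∈ℰ} ωᵉ = 1 and γ ≥ 0. Set Sᵉ = Cov(δᵉ), μᵉ = E[δᵉ], and K = S⁰ + γ Σ_{e∈ℰ} ωᵉ (Sᵉ − S⁰ + μᵉ(μᵉ)ᵀ). Then for every w ∈ ℝⁿ, the supremum over all Borel probability measures μ on ℝⁿ with finite second moments satisfying ∫ y yᵀ dμ(y) ⪯ K (Loewner order) of ∫∫ ⟨w, x + y⟩² d(law ε)(x) dμ(y) equals E[⟨w, ε + δ⁰⟩²] + γ Σ_{e∈ℰ} ωᵉ ( E[⟨w, ε + δᵉ⟩²] − E[⟨w, ε + δ⁰⟩²] ). -/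
open scoped Matrix
open MeasureTheory ProbabilityTheory

/-!
Since `ε` is centred and independent of the shift, the risk of `ε + Y` in direction `w` is
`E⟨w, ε⟩² + wᵀ M w` with `M` the second-moment matrix of `Y`. Covariance plus mean outer product
is the second moment and `δ⁰ = 0`, so `K = γ Σₑ ωᵉ Mₑ` and the right-hand side is
`E⟨w, ε⟩² + wᵀ K w`. On the left, `M ⪯ K` bounds `wᵀ M w` by `wᵀ K w`, and the bound is attained by
a Dirac mass at `a = K w / √(wᵀ K w)`: Cauchy–Schwarz for the semi-inner product `K` gives
`a aᵀ ⪯ K`.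
-/

namespace Matrix

variable {ι : Type*} [Fintype ι]

lemma PosSemidef.sq_dotProduct_mulVec_le {K : Matrix ι ι ℝ} (hK : K.PosSemidef) (x y : ι → ℝ) :
    (x ⬝ᵥ K *ᵥ y) ^ 2 ≤ (x ⬝ᵥ K *ᵥ x) * (y ⬝ᵥ K *ᵥ y) := by
  classical
  have hsymm : LinearMap.IsSymm K.toBilin' := LinearMap.BilinForm.isSymm_iff.1 <|
    isSymm_toBilin'_iff_isSymm.2 (isHermitian_iff_isSymm.1 hK.isHermitian)
  simpa only [toBilin'_apply'] using LinearMap.BilinForm.apply_sq_le_of_symm K.toBilin'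
    (fun x => by simpa [toBilin'_apply'] using hK.dotProduct_mulVec_nonneg x) hsymm x y

lemma dotProduct_vecMulVec_mulVec (a x : ι → ℝ) : x ⬝ᵥ vecMulVec a a *ᵥ x = (x ⬝ᵥ a) ^ 2 := by
  simp [vecMulVec_mulVec, dotProduct_comm a x, sq]

/-- The witness is `a = K w / √(wᵀ K w)`; when `wᵀ K w = 0` the junk value `(√0)⁻¹ = 0`
makes it `a = 0`. -/
lemma PosSemidef.exists_posSemidef_sub_vecMulVec {K : Matrix ι ι ℝ} (hK : K.PosSemidef)
    (w : ι → ℝ) : ∃ a, (K - vecMulVec a a).PosSemidef ∧ (w ⬝ᵥ a) ^ 2 = w ⬝ᵥ K *ᵥ w := by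
  set q := w ⬝ᵥ K *ᵥ w
  have hq : 0 ≤ q := by simpa using hK.dotProduct_mulVec_nonneg w
  have hsqrt : (√q)⁻¹ ^ 2 = q⁻¹ := by rw [inv_pow, Real.sq_sqrt hq]
  refine ⟨(√q)⁻¹ • K *ᵥ w, ?_, ?_⟩
  · refine PosSemidef.of_dotProduct_mulVec_nonneg
      (hK.isHermitian.sub (posSemidef_vecMulVec_self_star _).isHermitian) fun x => ?_
    rw [star_trivial, sub_mulVec, dotProduct_sub, dotProduct_vecMulVec_mulVec, dotProduct_smul,
      smul_eq_mul, mul_pow, hsqrt, inv_mul_eq_div, sub_nonneg]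
    exact div_le_of_le_mul₀ hq (by simpa using hK.dotProduct_mulVec_nonneg x)
      (hK.sq_dotProduct_mulVec_le x w)
  · rw [dotProduct_smul, smul_eq_mul, mul_pow, hsqrt, sq, ← mul_assoc]
    rcases hq.eq_or_lt with h | h
    · simp [← h]
    · rw [inv_mul_cancel₀ h.ne', one_mul]

end Matrix

noncomputable section

section SecondMoment

variable {α ι : Type*} [MeasurableSpace α]

def secondMoment (X : α → ι → ℝ) (μ : Measure α) : Matrix ι ι ℝ :=
  Matrix.of fun i j => ∫ a, X a i * X a j ∂μ

variable {X : α → ι → ℝ} {μ : Measure α}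

lemma memLp_dotProduct [Fintype ι] (hX : ∀ i, MemLp (fun a => X a i) 2 μ) (w : ι → ℝ) :
    MemLp (fun a => w ⬝ᵥ X a) 2 μ := by
  simpa only [dotProduct] using memLp_finsetSum _ fun i _ => (hX i).const_mul (w i)

lemma dotProduct_secondMoment_mulVec [Fintype ι] (hX : ∀ i, MemLp (fun a => X a i) 2 μ)
    (w : ι → ℝ) :
    w ⬝ᵥ secondMoment X μ *ᵥ w = ∫ a, (w ⬝ᵥ X a) ^ 2 ∂μ := by
  have hint : ∀ i j, Integrable (fun a => w i * (X a i * X a j) * w j) μ := fun i j =>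
    (((hX i).integrable_mul (hX j)).const_mul _).mul_const _
  have hexpand : ∀ a, (w ⬝ᵥ X a) ^ 2 = ∑ i, ∑ j, w i * (X a i * X a j) * w j := fun a => by
    simp only [sq, dotProduct, Finset.sum_mul_sum]
    exact Finset.sum_congr rfl fun i _ => Finset.sum_congr rfl fun j _ => by ring
  simp_rw [hexpand]
  rw [integral_finsetSum _ fun i _ => integrable_finsetSum _ fun j _ => hint i j]
  simp_rw [integral_finsetSum _ fun j _ => hint _ j, integral_mul_const, integral_const_mul]
  simp [dotProduct, Matrix.mulVec, secondMoment, Finset.mul_sum, mul_assoc]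

lemma secondMoment_posSemidef [Fintype ι] (hX : ∀ i, MemLp (fun a => X a i) 2 μ) :
    (secondMoment X μ).PosSemidef := by
  refine Matrix.PosSemidef.of_dotProduct_mulVec_nonneg ?_ fun w => ?_
  · ext i j
    simp [secondMoment, mul_comm]
  · rw [star_trivial, dotProduct_secondMoment_mulVec hX]
    exact integral_nonneg fun a => sq_nonneg _

lemma secondMoment_dirac (a : ι → ℝ) :
    secondMoment (fun y => y) (Measure.dirac a) = Matrix.vecMulVec a a := by
  ext i j
  exact integral_dirac' _ a ((measurable_pi_apply i).mul (measurable_pi_apply j)).stronglyMeasurable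

lemma secondMoment_eq_zero_of_ae_eq_zero (hX : X =ᵐ[μ] 0) : secondMoment X μ = 0 := by
  ext i j
  simpa [secondMoment] using integral_congr_ae (hX.mono fun a ha => by simp [ha] :
    (fun a => X a i * X a j) =ᵐ[μ] 0)

lemma of_covariance_eq_secondMoment_sub [IsProbabilityMeasure μ]
    (hX : ∀ i, MemLp (fun a => X a i) 2 μ) :
    (Matrix.of fun i j => cov[fun a => X a i, fun a => X a j; μ])
      = secondMoment X μ - Matrix.vecMulVec (fun i => ∫ a, X a i ∂μ) (fun i => ∫ a, X a i ∂μ) := by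
  ext i j
  simp [covariance_eq_sub (hX i) (hX j), secondMoment, Matrix.vecMulVec_apply]

end SecondMoment

section Independence

variable {Ω : Type*} [MeasurableSpace Ω] {μ : Measure Ω}

lemma integral_add_sq_of_indepFun {f g : Ω → ℝ} (hf : MemLp f 2 μ) (hg : MemLp g 2 μ)
    (hfg : IndepFun f g μ) (hf0 : ∫ ω, f ω ∂μ = 0) :
    ∫ ω, (f ω + g ω) ^ 2 ∂μ = ∫ ω, f ω ^ 2 ∂μ + ∫ ω, g ω ^ 2 ∂μ := by
  have hcross : ∫ ω, f ω * g ω ∂μ = 0 := by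
    rw [hfg.integral_fun_mul_eq_mul_integral hf.aestronglyMeasurable hg.aestronglyMeasurable,
      hf0, zero_mul]
  have h2 : Integrable (fun ω => 2 * (f ω * g ω)) μ := (hf.integrable_mul hg).const_mul 2
  have h12 : Integrable (fun ω => f ω ^ 2 + 2 * (f ω * g ω)) μ := hf.integrable_sq.add h2
  simp_rw [add_sq, mul_assoc]
  rw [integral_add h12 hg.integrable_sq, integral_add hf.integrable_sq h2,
    integral_const_mul, hcross, mul_zero, add_zero]

variable {n : Type*} [Fintype n]

lemma integral_dotProduct_add_sq_of_indepFun [IsFiniteMeasure μ] {ε X : Ω → n → ℝ}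
    (hε : ∀ i, MemLp (fun ω => ε ω i) 2 μ) (hε0 : ∀ i, ∫ ω, ε ω i ∂μ = 0)
    (hX : ∀ i, MemLp (fun ω => X ω i) 2 μ) (hεX : IndepFun ε X μ) (w : n → ℝ) :
    ∫ ω, (w ⬝ᵥ (ε ω + X ω)) ^ 2 ∂μ = ∫ ω, (w ⬝ᵥ ε ω) ^ 2 ∂μ + ∫ ω, (w ⬝ᵥ X ω) ^ 2 ∂μ := by
  have hmeas : Measurable fun v : n → ℝ => w ⬝ᵥ v := by fun_prop
  simp_rw [dotProduct_add]
  refine integral_add_sq_of_indepFun (memLp_dotProduct hε w) (memLp_dotProduct hX w)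
    (hεX.comp hmeas hmeas) ?_
  simp only [dotProduct]
  rw [integral_finsetSum _ fun i _ => ((hε i).integrable one_le_two).const_mul _]
  simp [integral_const_mul, hε0]

end Independence

section WorstCase

variable {ι : Type*} [Fintype ι]

-- The paper's uncertainty set `C^γ`.
def secondMomentDominated (K : Matrix ι ι ℝ) : Set (Measure (ι → ℝ)) :=
  {μ | IsProbabilityMeasure μ ∧ (∀ i, MemLp (fun y : ι → ℝ => y i) 2 μ) ∧
    (K - secondMoment (fun y => y) μ).PosSemidef}

lemma dirac_mem_secondMomentDominated {K : Matrix ι ι ℝ} {a : ι → ℝ}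
    (ha : (K - Matrix.vecMulVec a a).PosSemidef) : Measure.dirac a ∈ secondMomentDominated K := by
  refine ⟨inferInstance, fun i => ⟨(measurable_pi_apply i).aestronglyMeasurable, ?_⟩,
    by rwa [secondMoment_dirac]⟩
  simp

lemma isGreatest_integral_dotProduct_sq {K : Matrix ι ι ℝ} (hK : K.PosSemidef) (w : ι → ℝ) :
    IsGreatest ((fun μ => ∫ y, (w ⬝ᵥ y) ^ 2 ∂μ) '' secondMomentDominated K) (w ⬝ᵥ K *ᵥ w) := by
  refine ⟨?_, ?_⟩
  · obtain ⟨a, haK, ha⟩ := hK.exists_posSemidef_sub_vecMulVec w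
    exact ⟨_, dirac_mem_secondMomentDominated haK, by simp [ha]⟩
  · rintro _ ⟨μ, ⟨-, hμ2, hμK⟩, rfl⟩
    have hquad := hμK.dotProduct_mulVec_nonneg w
    rwa [star_trivial, Matrix.sub_mulVec, dotProduct_sub, sub_nonneg,
      dotProduct_secondMoment_mulVec hμ2] at hquad

lemma isGreatest_shiftRisk {Ω : Type*} [MeasurableSpace Ω] {P : Measure Ω}
    [IsProbabilityMeasure P] {ε : Ω → ι → ℝ} (hε : ∀ i, MemLp (fun ω => ε ω i) 2 P)
    (hε0 : ∀ i, ∫ ω, ε ω i ∂P = 0) {K : Matrix ι ι ℝ} (hK : K.PosSemidef) (w : ι → ℝ) :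
    IsGreatest {r : ℝ | ∃ μ : Measure (ι → ℝ), IsProbabilityMeasure μ ∧
        (∀ i, MemLp (fun y : ι → ℝ => y i) 2 μ) ∧
        (K - Matrix.of fun i j => ∫ y, y i * y j ∂μ).PosSemidef ∧
        r = ∫ y, ∫ ω, (w ⬝ᵥ (ε ω + y)) ^ 2 ∂P ∂μ}
      (∫ ω, (w ⬝ᵥ ε ω) ^ 2 ∂P + w ⬝ᵥ K *ᵥ w) := by
  set σ2 := ∫ ω, (w ⬝ᵥ ε ω) ^ 2 ∂P
  have hshift : ∀ y, ∫ ω, (w ⬝ᵥ (ε ω + y)) ^ 2 ∂P = σ2 + (w ⬝ᵥ y) ^ 2 := fun y => by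
    simpa using integral_dotProduct_add_sq_of_indepFun (X := fun _ => y) hε hε0
      (fun _ => memLp_const _) (indepFun_const_right ε y) w
  have hrisk : ∀ μ ∈ secondMomentDominated K,
      ∫ y, ∫ ω, (w ⬝ᵥ (ε ω + y)) ^ 2 ∂P ∂μ = σ2 + ∫ y, (w ⬝ᵥ y) ^ 2 ∂μ := by
    rintro μ ⟨_, hμ2, -⟩
    simp_rw [hshift]
    rw [integral_add (integrable_const σ2) (memLp_dotProduct hμ2 w).integrable_sq]
    simp
  have hset : {r : ℝ | ∃ μ : Measure (ι → ℝ), IsProbabilityMeasure μ ∧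
        (∀ i, MemLp (fun y : ι → ℝ => y i) 2 μ) ∧
        (K - Matrix.of fun i j => ∫ y, y i * y j ∂μ).PosSemidef ∧
        r = ∫ y, ∫ ω, (w ⬝ᵥ (ε ω + y)) ^ 2 ∂P ∂μ}
      = (σ2 + ·) '' ((fun μ => ∫ y, (w ⬝ᵥ y) ^ 2 ∂μ) '' secondMomentDominated K) := by
    ext r
    simp only [Set.image_image, Set.mem_image, secondMomentDominated, Set.mem_ofPred_eq,
      and_assoc]
    refine exists_congr fun μ => ⟨?_, ?_⟩ <;> rintro ⟨hμ, hμ2, hμK, rfl⟩ <;>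
      exact ⟨hμ, hμ2, hμK, (hrisk μ ⟨hμ, hμ2, hμK⟩).symm⟩
  rw [hset]
  exact (monotone_id.const_add σ2).map_isGreatest (isGreatest_integral_dotProduct_sq hK w)

end WorstCase

end

theorem stmt_3_general {Ω : Type*} [MeasureSpace Ω] [IsProbabilityMeasure (ℙ : Measure Ω)]
    {n : ℕ} {E : Type*} [Fintype E] (e₀ : E)
    (ε : Ω → (Fin n → ℝ)) (δ : E → Ω → (Fin n → ℝ))
    (hδ0 : ∀ᵐ ω ∂ℙ, δ e₀ ω = 0)
    (hεmean : ∀ i, ∫ ω, ε ω i = 0)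
    (hε2 : ∀ i, MemLp (fun ω => ε ω i) 2 ℙ)
    (hδ2 : ∀ e i, MemLp (fun ω => δ e ω i) 2 ℙ)
    (hindep : ∀ e, IndepFun ε (δ e) ℙ)
    (w' : E → ℝ) (hw'pos : ∀ e, 0 < w' e)
    (γ : ℝ) (hγ : 0 ≤ γ)
    (μe : E → (Fin n → ℝ)) (hμe : ∀ e i, μe e i = ∫ ω, δ e ω i)
    (S : E → Matrix (Fin n) (Fin n) ℝ)
    (hS : ∀ e i j, S e i j = ∫ ω, (δ e ω i - μe e i) * (δ e ω j - μe e j))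
    (K : Matrix (Fin n) (Fin n) ℝ)
    (hK : K = S e₀ + γ • ∑ e, w' e • (S e - S e₀ + Matrix.of fun i j => μe e i * μe e j)) :
    ∀ w : Fin n → ℝ,
      sSup {r : ℝ | ∃ μ : Measure (Fin n → ℝ), IsProbabilityMeasure μ ∧
          (∀ i, MemLp (fun y : Fin n → ℝ => y i) 2 μ) ∧
          (K - Matrix.of fun i j => ∫ y, y i * y j ∂μ).PosSemidef ∧
          r = ∫ y, ∫ ω, (w ⬝ᵥ (ε ω + y)) ^ 2 ∂ℙ ∂μ}
        = (∫ ω, (w ⬝ᵥ (ε ω + δ e₀ ω)) ^ 2)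
          + γ * ∑ e, w' e * ((∫ ω, (w ⬝ᵥ (ε ω + δ e ω)) ^ 2)
              - ∫ ω, (w ⬝ᵥ (ε ω + δ e₀ ω)) ^ 2)  := by
  intro w
  have hcov : ∀ e, S e = secondMoment (δ e) ℙ - Matrix.vecMulVec (μe e) (μe e) := fun e => by
    rw [show μe e = fun i => ∫ ω, δ e ω i from funext (hμe e),
      ← of_covariance_eq_secondMoment_sub (hδ2 e)]
    ext i j
    simp [hS, covariance, hμe]
  have hμ₀ : μe e₀ = 0 := funext fun i => by
    rw [hμe]; exact integral_eq_zero_of_ae (hδ0.mono fun ω h => by simp [h])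
  have hM₀ : secondMoment (δ e₀) ℙ = 0 := secondMoment_eq_zero_of_ae_eq_zero hδ0
  have hK' : K = γ • ∑ e, w' e • secondMoment (δ e) ℙ := by
    have hS₀ : S e₀ = 0 := by rw [hcov, hM₀, hμ₀]; simp
    simp only [hK, hS₀, zero_add, sub_zero]
    congr! 3 with e
    rw [hcov e]
    exact sub_add_cancel _ _
  have hKpsd : K.PosSemidef := hK' ▸ (Matrix.posSemidef_sum _ fun e _ =>
    (secondMoment_posSemidef (hδ2 e)).smul (hw'pos e).le).smul hγ
  have hrisk : ∀ e, ∫ ω, (w ⬝ᵥ (ε ω + δ e ω)) ^ 2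
      = (∫ ω, (w ⬝ᵥ ε ω) ^ 2) + w ⬝ᵥ secondMoment (δ e) ℙ *ᵥ w := fun e => by
    rw [integral_dotProduct_add_sq_of_indepFun hε2 hεmean (hδ2 e) (hindep e),
      dotProduct_secondMoment_mulVec (hδ2 e)]
  rw [(isGreatest_shiftRisk hε2 hεmean hKpsd w).csSup_eq, hK']
  simp only [hrisk, hM₀]
  simp [Matrix.smul_mulVec, Matrix.sum_mulVec, dotProduct_sum, Finset.mul_sum]

/-- Proposition 1 of the paper, in residual form: with `ε` the structural noise
(zero mean, finite second moments), `δᵉ` the training interventions (finite second moments,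
independent of `ε`, `δ⁰ = 0` a.s.), weights `ωᵉ > 0` summing to one and `γ ≥ 0`, set
`Sᵉ = Cov(δᵉ)`, `μᵉ = E[δᵉ]` and `K = S⁰ + γ Σₑ ωᵉ (Sᵉ − S⁰ + μᵉ(μᵉ)ᵀ)`.  Then for every
`w ∈ ℝⁿ`, the supremum over all Borel probability measures `μ` on `ℝⁿ` with finite second
moments whose second-moment matrix is Loewner-dominated by `K` of
`∫∫ ⟨w, x + y⟩² d(law ε)(x) dμ(y)` equals
`E[⟨w, ε + δ⁰⟩²] + γ Σₑ ωᵉ (E[⟨w, ε + δᵉ⟩²] − E[⟨w, ε + δ⁰⟩²])`. -/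
theorem stmt_3 {Ω : Type*} [MeasureSpace Ω] [IsProbabilityMeasure (ℙ : Measure Ω)]
    {n : ℕ} {E : Type*} [Fintype E] (e₀ : E)
    (ε : Ω → (Fin n → ℝ)) (δ : E → Ω → (Fin n → ℝ))
    (hεm : Measurable ε) (hδm : ∀ e, Measurable (δ e))
    (hδ0 : ∀ᵐ ω ∂ℙ, δ e₀ ω = 0)
    (hεmean : ∀ i, ∫ ω, ε ω i = 0)
    (hε2 : ∀ i, MemLp (fun ω => ε ω i) 2 ℙ)
    (hδ2 : ∀ e i, MemLp (fun ω => δ e ω i) 2 ℙ)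
    (hindep : ∀ e, IndepFun ε (δ e) ℙ)
    (w' : E → ℝ) (hw'pos : ∀ e, 0 < w' e) (hw'sum : ∑ e, w' e = 1)
    (γ : ℝ) (hγ : 0 ≤ γ)
    (μe : E → (Fin n → ℝ)) (hμe : ∀ e i, μe e i = ∫ ω, δ e ω i)
    (S : E → Matrix (Fin n) (Fin n) ℝ)
    (hS : ∀ e i j, S e i j = ∫ ω, (δ e ω i - μe e i) * (δ e ω j - μe e j))
    (K : Matrix (Fin n) (Fin n) ℝ)
    (hK : K = S e₀ + γ • ∑ e, w' e • (S e - S e₀ + Matrix.of fun i j => μe e i * μe e j)) :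
    ∀ w : Fin n → ℝ,
      sSup {r : ℝ | ∃ μ : Measure (Fin n → ℝ), IsProbabilityMeasure μ ∧
          (∀ i, MemLp (fun y : Fin n → ℝ => y i) 2 μ) ∧
          (K - Matrix.of fun i j => ∫ y, y i * y j ∂μ).PosSemidef ∧
          r = ∫ y, ∫ ω, (w ⬝ᵥ (ε ω + y)) ^ 2 ∂ℙ ∂μ}
        = (∫ ω, (w ⬝ᵥ (ε ω + δ e₀ ω)) ^ 2)
          + γ * ∑ e, w' e * ((∫ ω, (w ⬝ᵥ (ε ω + δ e ω)) ^ 2)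
              - ∫ ω, (w ⬝ᵥ (ε ω + δ e₀ ω)) ^ 2) :=
  stmt_3_general e₀ ε δ hδ0 hεmean hε2 hδ2 hindep w' hw'pos γ hγ μe hμe S hS K hK
end

section
/- Let G be a random vector in ℝᵖ whose law is the standard Gaussian measure on ℝᵖ (the p-fold product of the standard normal distribution on ℝ). Let μ ∈ ℝ^d, let A be a real d×p matrix, set X = μ + AG and Σ = AAᵀ, and let M be a real k×d matrix such that MΣMᵀ is invertible. Then, almost surely, the conditional expectation of X given the σ-algebra generated by MX is E[X | σ(MX)] = ΣMᵀ(MΣMᵀ)⁻¹ MX + (I − ΣMᵀ(MΣMᵀ)⁻¹M) μ; in particular E[X | σ(MX)] is an affine function of MX. -/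
/-!
Write `X = f (M X) + R` with `f y = C y + (1 - C M) μ`, `C = Σ Mᵀ (M Σ Mᵀ)⁻¹`, and residual
`R = (1 - C M) A G`. The coefficient `C` is chosen so that `(1 - C M) A (M A)ᵀ = 0`, i.e. `R` is
uncorrelated with `M A G`. The pair `(R, M A G)` is a linear image of the Gaussian vector `G`, hence
jointly Gaussian, so `R` is independent of `M A G` and therefore of `M X = M μ + M A G`. As `R` is
centred, `E[R | M X] = 0` and `E[X | M X] = f (M X)`.
-/

open scoped Matrix
open MeasureTheory ProbabilityTheory

@[fun_prop]
lemma Matrix.measurable_mulVec {m n : Type*} [Fintype n] (T : Matrix m n ℝ) :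
    Measurable fun v => T *ᵥ v :=
  measurable_pi_lambda _ fun i =>
    ((continuous_apply i).comp (continuous_const.matrix_mulVec continuous_id)).measurable

lemma Matrix.one_sub_mul_mul_transpose_eq_zero {R l m n : Type*} [CommRing R] [Fintype l]
    [Fintype m] [Fintype n] [DecidableEq m] [DecidableEq n] (A : Matrix m l R)
    (M : Matrix n m R) (h : IsUnit (M * (A * Aᵀ) * Mᵀ)) :
    (1 - A * Aᵀ * Mᵀ * (M * (A * Aᵀ) * Mᵀ)⁻¹ * M) * A * (M * A)ᵀ = 0 := by
  have hinv : A * Aᵀ * Mᵀ * (M * (A * Aᵀ) * Mᵀ)⁻¹ * (M * (A * Aᵀ) * Mᵀ) = A * Aᵀ * Mᵀ := by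
    rw [Matrix.mul_assoc, Matrix.nonsing_inv_mul _ ((Matrix.isUnit_iff_isUnit_det _).mp h),
      Matrix.mul_one]
  rw [Matrix.transpose_mul, Matrix.sub_mul, Matrix.sub_mul, Matrix.one_mul, sub_eq_zero]
  simpa only [Matrix.mul_assoc] using hinv.symm

namespace ProbabilityTheory

lemma isGaussian_pi_gaussianReal (ι : Type*) [Fintype ι] :
    IsGaussian (Measure.pi fun _ : ι => gaussianReal 0 1) := by
  have h : (stdGaussian (EuclideanSpace ℝ ι)).map (PiLp.continuousLinearEquiv 2 ℝ fun _ : ι => ℝ)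
      = Measure.pi fun _ => gaussianReal 0 1 := by
    rw [← map_pi_eq_stdGaussian, Measure.map_map (by fun_prop) (by fun_prop)]
    exact Measure.map_id
  rw [← h]
  infer_instance

lemma integral_id_pi_gaussianReal (ι : Type*) [Fintype ι] :
    ∫ x, x ∂(Measure.pi fun _ : ι => gaussianReal 0 1) = 0 := by
  funext i
  rw [eval_integral fun j => integrable_eval IsGaussian.integrable_id, integral_eval,
    integral_id_gaussianReal, Pi.zero_apply]

namespace HasLaw

variable {Ω ι : Type*} [Fintype ι] {mΩ : MeasurableSpace Ω} {P : Measure Ω} {G : Ω → ι → ℝ}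

lemma hasGaussianLaw_pi (hG : HasLaw G (Measure.pi fun _ => gaussianReal 0 1) P) :
    HasGaussianLaw G P :=
  haveI := isGaussian_pi_gaussianReal ι
  hG.hasGaussianLaw

lemma covariance_dotProduct_pi_gaussianReal
    (hG : HasLaw G (Measure.pi fun _ => gaussianReal 0 1) P) (v w : ι → ℝ) :
    cov[fun ω => v ⬝ᵥ G ω, fun ω => w ⬝ᵥ G ω; P] = v ⬝ᵥ w := by
  have := hG.isProbabilityMeasure
  have hL2 : ∀ i, MemLp (fun ω => G ω i) 2 P :=
    fun i => (hG.hasGaussianLaw_pi.eval i).memLp_two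
  have hmap : P.map (fun ω => WithLp.toLp 2 (G ω)) = stdGaussian (EuclideanSpace ℝ ι) := by
    rw [← map_pi_eq_stdGaussian, ← hG.map_eq,
      AEMeasurable.map_map_of_aemeasurable (by fun_prop) hG.aemeasurable]
    rfl
  have h := covarianceBilin_apply_pi hL2 (WithLp.toLp 2 v) (WithLp.toLp 2 w)
  rw [hmap, covarianceBilin_stdGaussian, innerSL_apply_apply, EuclideanSpace.inner_toLp_toLp,
    star_trivial, dotProduct_comm] at h
  rw [h]
  simp only [dotProduct]
  rw [covariance_fun_sum_fun_sum (fun i => (hL2 i).const_mul (v i))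
    fun j => (hL2 j).const_mul (w j)]
  simp only [covariance_const_mul_left, covariance_const_mul_right, mul_left_comm (w _),
    mul_assoc]

variable {κ κ' : Type*} [Fintype κ] [Fintype κ']

lemma integrable_mulVec_pi_gaussianReal
    (hG : HasLaw G (Measure.pi fun _ => gaussianReal 0 1) P) (V : Matrix κ ι ℝ) :
    Integrable (fun ω => V *ᵥ G ω) P :=
  V.mulVecLin.toContinuousLinearMap.integrable_comp hG.hasGaussianLaw_pi.integrable

lemma integral_mulVec_pi_gaussianReal
    (hG : HasLaw G (Measure.pi fun _ => gaussianReal 0 1) P) (V : Matrix κ ι ℝ) :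
    ∫ ω, V *ᵥ G ω ∂P = 0 :=
  calc ∫ ω, V *ᵥ G ω ∂P = V *ᵥ ∫ ω, G ω ∂P :=
        V.mulVecLin.toContinuousLinearMap.integral_comp_comm hG.hasGaussianLaw_pi.integrable
    _ = 0 := by rw [hG.integral_eq, integral_id_pi_gaussianReal, Matrix.mulVec_zero]

lemma indepFun_mulVec_of_mul_transpose_eq_zero
    (hG : HasLaw G (Measure.pi fun _ => gaussianReal 0 1) P) {V : Matrix κ ι ℝ}
    {W : Matrix κ' ι ℝ} (hVW : V * Wᵀ = 0) :
    IndepFun (fun ω => V *ᵥ G ω) (fun ω => W *ᵥ G ω) P := by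
  have hjoint : HasGaussianLaw (fun ω => (V *ᵥ G ω, W *ᵥ G ω)) P :=
    hG.hasGaussianLaw_pi.map_fun
      (V.mulVecLin.toContinuousLinearMap.prod W.mulVecLin.toContinuousLinearMap)
  refine hjoint.indepFun_of_covariance_eval fun i j => ?_
  change cov[fun ω => V i ⬝ᵥ G ω, fun ω => W j ⬝ᵥ G ω; P] = 0
  rw [hG.covariance_dotProduct_pi_gaussianReal]
  exact Matrix.mul_apply'.symm.trans (congrFun₂ hVW i j)

end HasLaw

end ProbabilityTheory

lemma condExp_comap_eq_of_add_indepFun {Ω E F : Type*} {mΩ : MeasurableSpace Ω}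
    {P : Measure Ω} [IsFiniteMeasure P] [NormedAddCommGroup E] [NormedSpace ℝ E]
    [CompleteSpace E] [MeasurableSpace E] [BorelSpace E] [SecondCountableTopology E]
    [mF : MeasurableSpace F] {X R : Ω → E} {Y : Ω → F} {f : F → E} (hY : Measurable Y)
    (hf : Measurable f) (hR : Measurable R) (hXint : Integrable X P) (hRint : Integrable R P)
    (hind : IndepFun R Y P) (hmean : ∫ ω, R ω ∂P = 0) (hX : ∀ ω, X ω = f (Y ω) + R ω) :
    P[X | mF.comap Y] =ᵐ[P] fun ω => f (Y ω) := by
  have hle := hY.comap_le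
  have := isFiniteMeasure_trim hle (μ := P)
  have hfY : StronglyMeasurable[mF.comap Y] fun ω => f (Y ω) :=
    (hf.comp (comap_measurable Y)).stronglyMeasurable
  have hfYint : Integrable (fun ω => f (Y ω)) P :=
    (hXint.sub hRint).congr (ae_of_all _ fun ω => by simp [hX ω])
  have hRcond : P[R | mF.comap Y] =ᵐ[P] fun _ => 0 := by
    simpa only [hmean] using condExp_indep_eq hR.comap_le hle
      (comap_measurable R).stronglyMeasurable ((IndepFun_iff_Indep _ _ _).1 hind)
  calc P[X | mF.comap Y] = P[(fun ω => f (Y ω)) + R | mF.comap Y] := by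
        rw [show X = (fun ω => f (Y ω)) + R from funext hX]
    _ =ᵐ[P] P[fun ω => f (Y ω) | mF.comap Y] + P[R | mF.comap Y] := condExp_add hfYint hRint _
    _ =ᵐ[P] (fun ω => f (Y ω)) + fun _ => 0 := by
        rw [condExp_of_stronglyMeasurable hle hfY hfYint]
        exact Filter.EventuallyEq.rfl.add hRcond
    _ = fun ω => f (Y ω) := add_zero _

theorem stmt_7_general {Ω : Type*} [MeasureSpace Ω]
    {p d k : ℕ} (G : Ω → (Fin p → ℝ)) (hGm : Measurable G)
    (hGlaw : Measure.map G ℙ = Measure.pi fun _ : Fin p => gaussianReal 0 1)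
    (μv : Fin d → ℝ) (A : Matrix (Fin d) (Fin p) ℝ)
    (X : Ω → (Fin d → ℝ)) (hX : ∀ ω, X ω = μv + A.mulVec (G ω))
    (S : Matrix (Fin d) (Fin d) ℝ) (hSdef : S = A * Aᵀ)
    (M : Matrix (Fin k) (Fin d) ℝ) (hinv : IsUnit (M * S * Mᵀ)) :
    ℙ[X | MeasurableSpace.comap (fun ω => M.mulVec (X ω)) inferInstance]
      =ᵐ[ℙ] fun ω =>
        (S * Mᵀ * (M * S * Mᵀ)⁻¹).mulVec (M.mulVec (X ω))
          + (1 - S * Mᵀ * (M * S * Mᵀ)⁻¹ * M).mulVec μv := by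
  subst hSdef
  set C := A * Aᵀ * Mᵀ * (M * (A * Aᵀ) * Mᵀ)⁻¹
  have hG : HasLaw G (Measure.pi fun _ => gaussianReal 0 1) ℙ := ⟨hGm.aemeasurable, hGlaw⟩
  have := hG.isProbabilityMeasure
  have hXm : Measurable X := by
    rw [funext hX]
    fun_prop
  have hMX : (fun ω => M *ᵥ X ω) = fun ω => M *ᵥ μv + (M * A) *ᵥ G ω := by
    funext ω
    rw [hX, Matrix.mulVec_add, Matrix.mulVec_mulVec]
  have hindep : IndepFun (fun ω => ((1 - C * M) * A) *ᵥ G ω) (fun ω => M *ᵥ X ω) ℙ := by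
    rw [hMX]
    exact (hG.indepFun_mulVec_of_mul_transpose_eq_zero
      (Matrix.one_sub_mul_mul_transpose_eq_zero A M hinv)).comp measurable_id
      (measurable_const_add (M *ᵥ μv))
  refine condExp_comap_eq_of_add_indepFun (f := fun y => C *ᵥ y + (1 - C * M) *ᵥ μv)
    (by fun_prop) (by fun_prop) (by fun_prop) ?_ (hG.integrable_mulVec_pi_gaussianReal _) hindep
    (hG.integral_mulVec_pi_gaussianReal _) fun ω => ?_
  · rw [funext hX]
    exact (integrable_const μv).add (hG.integrable_mulVec_pi_gaussianReal A)
  · rw [hX ω]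
    simp only [Matrix.mulVec_add, Matrix.mulVec_mulVec, Matrix.sub_mulVec, Matrix.one_mulVec,
      Matrix.sub_mul, Matrix.one_mul, Matrix.mul_assoc]
    abel

/-- Gaussian case of Lemma 3: Let `G` be a standard Gaussian random vector in
`ℝᵖ`, `X = μ + A G`, `Σ = A Aᵀ`, and `M` a real `k × d` matrix with `M Σ Mᵀ` invertible.
Then, almost surely,
`E[X | σ(MX)] = Σ Mᵀ (M Σ Mᵀ)⁻¹ M X + (I − Σ Mᵀ (M Σ Mᵀ)⁻¹ M) μ`;
in particular the conditional expectation of `X` given `M X` is affine in `M X`. -/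
theorem stmt_7 {Ω : Type*} [MeasureSpace Ω] [IsProbabilityMeasure (ℙ : Measure Ω)]
    {p d k : ℕ} (G : Ω → (Fin p → ℝ)) (hGm : Measurable G)
    (hGlaw : Measure.map G ℙ = Measure.pi fun _ : Fin p => gaussianReal 0 1)
    (μv : Fin d → ℝ) (A : Matrix (Fin d) (Fin p) ℝ)
    (X : Ω → (Fin d → ℝ)) (hX : ∀ ω, X ω = μv + A.mulVec (G ω))
    (S : Matrix (Fin d) (Fin d) ℝ) (hSdef : S = A * Aᵀ)
    (M : Matrix (Fin k) (Fin d) ℝ) (hinv : IsUnit (M * S * Mᵀ)) :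
    ℙ[X | MeasurableSpace.comap (fun ω => M.mulVec (X ω)) inferInstance]
      =ᵐ[ℙ] fun ω =>
        (S * Mᵀ * (M * S * Mᵀ)⁻¹).mulVec (M.mulVec (X ω))
          + (1 - S * Mᵀ * (M * S * Mᵀ)⁻¹ * M).mulVec μv :=
  stmt_7_general G hGm hGlaw μv A X hX S hSdef M hinv
end
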